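/- Let (P, Q) and (P', Q') be pairs of orthogonal projections on H with P - Q = P' - Q'. Then ‖PQ - Π‖ = ‖P'Q' - Π'‖, where Π is the orthogonal projection onto the closed subspace ran P ∩ ran Q and Π' is the orthogonal projection onto ran P' ∩ ran Q'. (Equivalently, the cosine of the Friedrichs angle between ran P and ran Q is an invariant of the difference P - Q.) -/

import Mathlib

/-!
With `E` the projection onto `ran P ∩ ran Q` and `T = PQP - E`, the C*-identity gives
`‖PQ - E‖² = ‖T‖`, and `T` is self-adjoint, so `‖T‖` is the largest modulus of a point of its
spectrum. Off `{0, 1}` that spectrum depends only on `P - Q`: subtracting `E` only moves the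
eigenvalue `1` of `PQP` on `ran E` to `0`, and `PQP` has the same spectrum off `{0, 1}` as
`1 - (P - Q)² = PQP + (1 - P)(1 - Q)(1 - P)`, because `λ ↦ 1 - λ` and
`σ(xy) \ {0} = σ(yx) \ {0}` carry the spectrum of `(1 - P)(1 - Q)(1 - P)` onto that of `PQP`.
The point `1` needs one more argument: `T` has no fixed vector, so if `1 ∈ σ(T)` it is not
isolated there and is a limit of spectral values that depend only on `P - Q`.
-/

open ContinuousLinearMap

variable {H : Type*} [NormedAddCommGroup H] [InnerProductSpace ℂ H] [CompleteSpace H]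

/-- An orthogonal projection: a selfadjoint idempotent bounded operator. -/
def IsOrthogonalProjection (P : H →L[ℂ] H) : Prop :=
  IsSelfAdjoint P ∧ P * P = P

/-- A symmetry: a selfadjoint unitary operator. -/
def IsSymmetry (V : H →L[ℂ] H) : Prop :=
  IsSelfAdjoint V ∧ V * V = 1

/-- Two orthogonal projections are in generic position if the four canonical
intersections of their ranges and kernels are trivial. -/
def GenericPosition (P Q : H →L[ℂ] H) : Prop :=
  LinearMap.range (P : H →ₗ[ℂ] H) ⊓ LinearMap.range (Q : H →ₗ[ℂ] H) = ⊥ ∧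
  LinearMap.range (P : H →ₗ[ℂ] H) ⊓ LinearMap.ker (Q : H →ₗ[ℂ] H) = ⊥ ∧
  LinearMap.ker (P : H →ₗ[ℂ] H) ⊓ LinearMap.range (Q : H →ₗ[ℂ] H) = ⊥ ∧
  LinearMap.ker (P : H →ₗ[ℂ] H) ⊓ LinearMap.ker (Q : H →ₗ[ℂ] H) = ⊥

section Idempotent

variable {𝕜 A : Type*} [Field 𝕜] [Ring A] [Algebra 𝕜 A]

theorem isUnit_smul_one_sub_add_mul {r c : A} {μ : 𝕜} (hμ : μ ≠ 0) (hr : IsIdempotentElem r)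
    (hc : IsUnit c) (hcr : Commute c r) : IsUnit (μ • (1 - r) + c * r) := by
  have hinv : ∀ (ν : 𝕜) (d : Aˣ), ν ≠ 0 → Commute (d : A) r →
      (ν • (1 - r) + d * r) * (ν⁻¹ • (1 - r) + ↑d⁻¹ * r) = 1 := by
    intro ν d hν hdr
    have hdr' : Commute (↑d⁻¹ : A) r := hdr.units_inv_left
    have e1 : (1 - r) * (↑d⁻¹ * r) = 0 := by
      rw [← mul_assoc, ← ((Commute.one_right _).sub_right hdr').eq, mul_assoc,
        hr.one_sub_mul_self, mul_zero]
    have e2 : (d : A) * (r * (↑d⁻¹ * r)) = r := by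
      rw [← mul_assoc r, ← hdr'.eq, mul_assoc, hr.eq, Units.mul_inv_cancel_left]
    simp only [add_mul, mul_add, smul_mul_assoc, mul_smul_comm, mul_assoc, smul_smul,
      hr.one_sub.eq, hr.mul_one_sub_self, e1, e2, mul_zero, smul_zero, add_zero,
      inv_mul_cancel₀ hν, one_smul, zero_add, sub_add_cancel]
  obtain ⟨d, rfl⟩ := hc
  refine isUnit_iff_exists.2 ⟨μ⁻¹ • (1 - r) + ↑d⁻¹ * r, hinv μ d hμ hcr, ?_⟩
  simpa using hinv μ⁻¹ d⁻¹ (inv_ne_zero hμ) hcr.units_inv_left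

theorem spectrum_mul_sdiff_zero_subset {a r : A} (hr : IsIdempotentElem r) (har : Commute a r) :
    spectrum 𝕜 (a * r) \ {0} ⊆ spectrum 𝕜 a := by
  rintro μ ⟨hμ, hμ0 : μ ≠ 0⟩
  by_contra ha
  refine (spectrum.mem_iff.1 hμ) ?_
  have hsplit : algebraMap 𝕜 A μ - a * r = μ • (1 - r) + (algebraMap 𝕜 A μ - a) * r := by
    simp only [Algebra.algebraMap_eq_smul_one, smul_sub, sub_mul, smul_one_mul]
    abel
  rw [hsplit]
  exact isUnit_smul_one_sub_add_mul hμ0 hr (spectrum.notMem_iff.1 ha)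
    ((Algebra.commute_algebraMap_left μ r).sub_left har)

theorem spectrum_add_sdiff_zero_subset {a b : A} (hab : a * b = 0) :
    spectrum 𝕜 (a + b) \ {0} ⊆ spectrum 𝕜 a ∪ spectrum 𝕜 b := by
  rintro μ ⟨hμ, hμ0 : μ ≠ 0⟩
  by_contra hab'
  simp only [Set.mem_union, not_or, spectrum.notMem_iff] at hab'
  refine (spectrum.mem_iff.1 hμ) ?_
  have hfactor : algebraMap 𝕜 A μ - (a + b)
      = algebraMap 𝕜 A μ⁻¹ * ((algebraMap 𝕜 A μ - a) * (algebraMap 𝕜 A μ - b)) := by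
    simp only [Algebra.algebraMap_eq_smul_one, mul_sub, sub_mul, smul_mul_assoc, mul_smul_comm,
      one_mul, mul_one, hab, smul_sub, smul_smul, mul_inv_cancel₀ hμ0, mul_inv_cancel_right₀ hμ0,
      one_smul, smul_zero]
    abel
  rw [hfactor]
  exact ((isUnit_iff_ne_zero.2 (inv_ne_zero hμ0)).map _).mul (hab'.1.mul hab'.2)

theorem IsIdempotentElem.mul_one_sub_mul {r : A} (hr : IsIdempotentElem r) (x : A) :
    r * (1 - x) * r = r - r * x * r := by
  rw [mul_sub, mul_one, sub_mul, hr.eq]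

theorem mem_spectrum_sub_iff {r z : A} (hr : IsIdempotentElem r) (hzr : z * r = z)
    (hrz : r * z = z) {μ : 𝕜} (h0 : μ ≠ 0) (h1 : μ ≠ 1) :
    μ ∈ spectrum 𝕜 (r - z) ↔ 1 - μ ∈ spectrum 𝕜 z := by
  have hnotMem : ∀ w : A, w * r = w → r * w = w → ∀ ν : 𝕜, ν ≠ 0 →
      1 - ν ∉ spectrum 𝕜 w → ν ∉ spectrum 𝕜 (r - w) := by
    intro w hwr hrw ν hν hw
    rw [spectrum.notMem_iff] at hw ⊢
    have hsplit : algebraMap 𝕜 A ν - (r - w)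
        = ν • (1 - r) + -(algebraMap 𝕜 A (1 - ν) - w) * r := by
      simp only [Algebra.algebraMap_eq_smul_one, neg_sub, sub_mul, smul_mul_assoc, one_mul, hwr,
        sub_smul, one_smul, smul_sub]
      abel
    rw [hsplit]
    exact isUnit_smul_one_sub_add_mul hν hr hw.neg
      (((Algebra.commute_algebraMap_left _ r).sub_left (hwr.trans hrw.symm)).neg_left)
  constructor
  · exact fun hμ => not_not.1 fun hz => hnotMem z hzr hrz μ h0 hz hμ
  · intro hz
    by_contra hμ
    refine hnotMem (r - z) ?_ ?_ (1 - μ) (sub_ne_zero.2 h1.symm) (by rwa [sub_sub_cancel]) ?_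
    · rw [sub_mul, hr.eq, hzr]
    · rw [mul_sub, hr.eq, hrz]
    · rwa [sub_sub_cancel]

theorem mem_spectrum_mul_mul_comm {p q : A} (hp : IsIdempotentElem p) (hq : IsIdempotentElem q)
    {μ : 𝕜} (hμ : μ ≠ 0) : μ ∈ spectrum 𝕜 (p * q * p) ↔ μ ∈ spectrum 𝕜 (q * p * q) := by
  have h := Set.ext_iff.1 (spectrum.nonzero_mul_comm (𝕜 := 𝕜) (p * q) (q * p)) μ
  simp only [← mul_assoc, hq.mul_mul_self, hp.mul_mul_self, Set.mem_sdiff,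
    Set.mem_singleton_iff, hμ, not_false_eq_true, and_true] at h
  exact h

theorem mem_spectrum_compl_mul_mul_iff {p q : A} (hp : IsIdempotentElem p)
    (hq : IsIdempotentElem q) {μ : 𝕜} (h0 : μ ≠ 0) (h1 : μ ≠ 1) :
    μ ∈ spectrum 𝕜 ((1 - p) * (1 - q) * (1 - p)) ↔ μ ∈ spectrum 𝕜 (p * q * p) := by
  have hcorner : ∀ {r : A}, IsIdempotentElem r → ∀ x : A,
      r * x * r * r = r * x * r ∧ r * (r * x * r) = r * x * r := fun hr x =>
    ⟨hr.mul_mul_self _, by rw [← mul_assoc, ← mul_assoc, hr.eq]⟩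
  have h1' : 1 - μ ≠ 0 := sub_ne_zero.2 h1.symm
  rw [mem_spectrum_mul_mul_comm hp.one_sub hq.one_sub h0, hq.one_sub.mul_one_sub_mul,
    mem_spectrum_sub_iff hq.one_sub (hcorner hq.one_sub p).1 (hcorner hq.one_sub p).2 h0 h1,
    mem_spectrum_mul_mul_comm hq.one_sub hp h1', hp.mul_one_sub_mul,
    mem_spectrum_sub_iff hp (hcorner hp q).1 (hcorner hp q).2 h1' (by simpa using h0),
    sub_sub_cancel]

theorem spectrum_mul_mul_sdiff_eq {p q : A} (hp : IsIdempotentElem p) (hq : IsIdempotentElem q) :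
    spectrum 𝕜 (p * q * p) \ {0, 1} = spectrum 𝕜 (1 - (p - q) ^ 2) \ {0, 1} := by
  have hright : (1 - (p - q) ^ 2) * p = p * q * p := by
    simp only [sq, mul_sub, sub_mul, one_mul, mul_assoc, hp.eq, hq.eq]
    abel
  have hleft : p * (1 - (p - q) ^ 2) = p * q * p := by
    simp only [sq, mul_sub, sub_mul, mul_one, mul_assoc, hp.eq, hq.eq, hp.mul_self_mul]
    abel
  have hdecomp : 1 - (p - q) ^ 2 = p * q * p + (1 - p) * (1 - q) * (1 - p) := by
    simp only [sq, mul_sub, sub_mul, one_mul, mul_one, mul_assoc, hp.eq, hq.eq]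
    abel
  have horth : p * q * p * ((1 - p) * (1 - q) * (1 - p)) = 0 := by
    rw [mul_assoc, ← mul_assoc p, ← mul_assoc p, hp.mul_one_sub_self, zero_mul, zero_mul, mul_zero]
  ext μ
  simp only [Set.mem_sdiff, Set.mem_insert_iff, Set.mem_singleton_iff, not_or, and_congr_left_iff]
  rintro ⟨h0, h1⟩
  constructor
  · intro hμ
    rw [← hright] at hμ
    exact spectrum_mul_sdiff_zero_subset hp (hright.trans hleft.symm) ⟨hμ, h0⟩
  · intro hμ
    rw [hdecomp] at hμ
    rcases spectrum_add_sdiff_zero_subset horth ⟨hμ, h0⟩ with hμ | hμ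
    · exact hμ
    · exact (mem_spectrum_compl_mul_mul_iff hp hq h0 h1).1 hμ

theorem spectrum_sub_sdiff_eq {a e : A} (he : IsIdempotentElem e) (hae : a * e = e)
    (hea : e * a = e) : spectrum 𝕜 (a - e) \ {0, 1} = spectrum 𝕜 a \ {0, 1} := by
  have hcompl : a - e = a * (1 - e) := by rw [mul_sub, mul_one, hae]
  have hcomm : Commute a (1 - e) := by
    rw [Commute, SemiconjBy, ← hcompl, sub_mul, one_mul, hea]
  have horth : (a - e) * e = 0 := by rw [sub_mul, hae, he.eq, sub_self]
  ext μ
  simp only [Set.mem_sdiff, Set.mem_insert_iff, Set.mem_singleton_iff, not_or, and_congr_left_iff]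
  rintro ⟨h0, h1⟩
  constructor
  · intro hμ
    rw [hcompl] at hμ
    exact spectrum_mul_sdiff_zero_subset he.one_sub hcomm ⟨hμ, h0⟩
  · intro hμ
    rw [← sub_add_cancel a e] at hμ
    rcases spectrum_add_sdiff_zero_subset horth ⟨hμ, h0⟩ with hμ | hμ
    · exact hμ
    · rcases he.spectrum_subset 𝕜 hμ with rfl | rfl <;> simp_all

theorem spectrum_mul_mul_sub_sdiff_eq {p q e : A} (hp : IsIdempotentElem p)
    (hq : IsIdempotentElem q) (he : IsIdempotentElem e) (hpe : p * e = e) (hep : e * p = e)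
    (hqe : q * e = e) (heq : e * q = e) :
    spectrum 𝕜 (p * q * p - e) \ {0, 1} = spectrum 𝕜 (1 - (p - q) ^ 2) \ {0, 1} := by
  rw [spectrum_sub_sdiff_eq he (by rw [mul_assoc, hpe, mul_assoc, hqe, hpe])
    (by rw [← mul_assoc, ← mul_assoc, hep, heq, hep]), spectrum_mul_mul_sdiff_eq hp hq]

end Idempotent

theorem IsSelfAdjoint.mul_eq_left_of_mul_eq_right {R : Type*} [Monoid R] [StarMul R] {p e : R}
    (hp : IsSelfAdjoint p) (he : IsSelfAdjoint e) (h : p * e = e) : e * p = e := by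
  simpa [hp.star_eq, he.star_eq] using congrArg star h

section CStarAlgebra

variable {A : Type*} [CStarAlgebra A]

theorem exists_ne_zero_mul_eq_smul_of_notMem_closure {a : A} [IsStarNormal a] {μ : ℂ}
    (hμ : μ ∈ spectrum ℂ a) (hiso : μ ∉ closure (spectrum ℂ a \ {μ})) :
    ∃ b ≠ 0, a * b = μ • b := by
  obtain ⟨ε, hε, hfar⟩ : ∃ ε > 0, ∀ z ∈ spectrum ℂ a \ {μ}, ε ≤ dist μ z := by
    simpa [Metric.mem_closure_iff] using hiso
  -- `a - μ` annihilates `cfc f a` for a bump `f` at `μ` that vanishes on the rest of the spectrum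
  set f : ℂ → ℂ := fun z => ((max 0 (ε - dist z μ) : ℝ) : ℂ) with hf
  have hvanish : (spectrum ℂ a).EqOn (fun z => z * f z - μ * f z) 0 := by
    intro z hz
    rcases eq_or_ne z μ with rfl | hzμ
    · simp
    · have : ε ≤ dist z μ := dist_comm μ z ▸ hfar z ⟨hz, hzμ⟩
      simp [hf, max_eq_left (sub_nonpos.2 this)]
  refine ⟨cfc f a, fun h0 => ?_, ?_⟩
  · have := (cfc_eq_cfc_iff_eqOn (f := f) (g := 0) (a := a)).1 (by rw [h0, cfc_zero]) hμ
    simp only [hf, dist_self, sub_zero, Pi.zero_apply, Complex.ofReal_eq_zero] at this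
    exact hε.ne' (this ▸ (max_eq_right hε.le).symm)
  · have hcalc : cfc (fun z => z * f z - μ * f z) a = a * cfc f a - μ • cfc f a := by
      rw [cfc_sub _ _ a, cfc_mul (fun z => z) f a, cfc_id' ℂ a, cfc_const_mul μ f a]
    rw [← sub_eq_zero, ← hcalc, cfc_congr hvanish, cfc_zero]

theorem norm_le_norm_of_spectrum_sdiff_subset {a b : A} [IsStarNormal a]
    (ha : ∀ c : A, a * c = c → c = 0) (hab : spectrum ℂ a \ {0, 1} ⊆ spectrum ℂ b) :
    ‖a‖ ≤ ‖b‖ := by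
  nontriviality A
  obtain ⟨z, hz, hza⟩ := spectrum.exists_nnnorm_eq_spectralRadius a
  rw [IsStarNormal.spectralRadius_eq_nnnorm, ENNReal.coe_inj] at hza
  have hza : ‖z‖ = ‖a‖ := congrArg NNReal.toReal hza
  rw [← hza]
  by_cases hz01 : z ∈ ({0, 1} : Set ℂ)
  swap
  · exact spectrum.norm_le_norm_of_mem (hab ⟨hz, hz01⟩)
  rcases hz01 with rfl | rfl
  · simp
  -- `1` is not an eigenvalue, so it is not isolated in the spectrum of `a`
  have hacc : (1 : ℂ) ∈ closure (spectrum ℂ a \ {1}) := by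
    by_contra hiso
    obtain ⟨c, hc0, hc⟩ := exists_ne_zero_mul_eq_smul_of_notMem_closure hz hiso
    exact hc0 (ha c (by rw [hc, one_smul]))
  have hsub : spectrum ℂ a \ {1} ⊆ (spectrum ℂ a \ {0, 1}) ∪ {0} := by
    intro w hw
    by_cases hw0 : w = 0
    · exact Or.inr hw0
    · exact Or.inl ⟨hw.1, by simp [hw0, hw.2]⟩
  have h1 := closure_mono hsub hacc
  rw [closure_union, closure_singleton] at h1
  have h1b : (1 : ℂ) ∈ spectrum ℂ b := by
    rcases h1 with h1 | h1
    · exact (spectrum.isClosed b).closure_subset_iff.2 hab h1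
    · simp at h1
  exact spectrum.norm_le_norm_of_mem h1b

theorem norm_mul_sub_sq {p q e : A} (hp : IsStarProjection p) (hq : IsStarProjection q)
    (he : IsStarProjection e) (hpe : p * e = e) (hqe : q * e = e) :
    ‖p * q - e‖ ^ 2 = ‖p * q * p - e‖ := by
  have hep := hp.isSelfAdjoint.mul_eq_left_of_mul_eq_right he.isSelfAdjoint hpe
  have heq := hq.isSelfAdjoint.mul_eq_left_of_mul_eq_right he.isSelfAdjoint hqe
  have hstar : star (p * q - e) = q * p - e := by
    simp [hp.isSelfAdjoint.star_eq, hq.isSelfAdjoint.star_eq, he.isSelfAdjoint.star_eq]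
  rw [sq, ← CStarRing.norm_self_mul_star, hstar]
  congr 1
  simp only [mul_sub, sub_mul, mul_assoc, hq.isIdempotentElem.mul_self_mul, hqe, hpe,
    he.isIdempotentElem.eq]
  simp only [← mul_assoc, heq, hep]
  abel

end CStarAlgebra

theorem IsOrthogonalProjection.isStarProjection {P : H →L[ℂ] H} (hP : IsOrthogonalProjection P) :
    IsStarProjection P :=
  ⟨hP.2, hP.1⟩

theorem IsStarProjection.mul_eq_right_and_left_of_range_le {P E : H →L[ℂ] H}
    (hP : IsStarProjection P) (hE : IsStarProjection E)
    (h : LinearMap.range (E : H →ₗ[ℂ] H) ≤ LinearMap.range (P : H →ₗ[ℂ] H)) :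
    P * E = E ∧ E * P = E := by
  have hPE : P * E = E := ContinuousLinearMap.ext fun x =>
    (LinearMap.IsIdempotentElem.mem_range_iff hP.isIdempotentElem.toLinearMap).1 (h ⟨x, rfl⟩)
  exact ⟨hPE, hP.isSelfAdjoint.mul_eq_left_of_mul_eq_right hE.isSelfAdjoint hPE⟩

theorem eq_zero_of_mul_mul_sub_apply_eq_self {P Q E : H →L[ℂ] H} (hP : IsStarProjection P)
    (hQ : IsStarProjection Q) (hE : IsStarProjection E)
    (hErange : LinearMap.range (E : H →ₗ[ℂ] H)
      = LinearMap.range (P : H →ₗ[ℂ] H) ⊓ LinearMap.range (Q : H →ₗ[ℂ] H))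
    {x : H} (hx : (P * Q * P - E) x = x) : x = 0 := by
  have hEP := (hP.mul_eq_right_and_left_of_range_le hE (hErange ▸ inf_le_left)).2
  have hEQ := (hQ.mul_eq_right_and_left_of_range_le hE (hErange ▸ inf_le_right)).2
  have hEx : E x = 0 := by
    have hET : E * (P * Q * P - E) = 0 := by
      rw [mul_sub, ← mul_assoc, ← mul_assoc, hEP, hEQ, hEP, hE.isIdempotentElem.eq, sub_self]
    rw [← hx, ← mul_apply_eq_comp, hET, zero_apply]
  have hPQP : P (Q (P x)) = x := by simpa [hEx] using hx
  have hPx : P x = x := by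
    rw [← hPQP, ← mul_apply_eq_comp P P, hP.isIdempotentElem.eq]
  have hPQ : P (Q x) = x := by rwa [hPx] at hPQP
  have hcontr : ∀ {R : H →L[ℂ] H}, IsStarProjection R → ∀ y, ‖R y‖ ≤ ‖y‖ := fun {R} hR y =>
    (R.le_of_opNorm_le (hR.norm_le R) y).trans_eq (one_mul _)
  have hQx : Q x = x := by
    have hnorm : ‖Q x‖ = ‖x‖ :=
      le_antisymm (hcontr hQ x) (by simpa only [hPQ] using hcontr hP (Q x))
    obtain ⟨_, hQeq⟩ := isStarProjection_iff_eq_starProjection_range.1 hQ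
    have hmem := (Q.range.mem_iff_norm_starProjection x).2 (by rw [← hQeq]; exact hnorm)
    exact (LinearMap.IsIdempotentElem.mem_range_iff hQ.isIdempotentElem.toLinearMap).1 hmem
  have hEx' : E x = x :=
    (LinearMap.IsIdempotentElem.mem_range_iff hE.isIdempotentElem.toLinearMap).1
      (hErange ▸ ⟨⟨x, hPx⟩, ⟨x, hQx⟩⟩)
  rw [← hEx', hEx]

theorem norm_mul_mul_sub_le_of_sub_eq {P Q E P' Q' E' : H →L[ℂ] H} (hP : IsStarProjection P)
    (hQ : IsStarProjection Q) (hE : IsStarProjection E)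
    (hErange : LinearMap.range (E : H →ₗ[ℂ] H)
      = LinearMap.range (P : H →ₗ[ℂ] H) ⊓ LinearMap.range (Q : H →ₗ[ℂ] H))
    (hP' : IsStarProjection P') (hQ' : IsStarProjection Q') (hE' : IsStarProjection E')
    (hE'range : LinearMap.range (E' : H →ₗ[ℂ] H)
      = LinearMap.range (P' : H →ₗ[ℂ] H) ⊓ LinearMap.range (Q' : H →ₗ[ℂ] H))
    (hdiff : P - Q = P' - Q') :
    ‖P * Q * P - E‖ ≤ ‖P' * Q' * P' - E'‖ := by
  obtain ⟨hPE, hEP⟩ := hP.mul_eq_right_and_left_of_range_le hE (hErange ▸ inf_le_left)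
  obtain ⟨hQE, hEQ⟩ := hQ.mul_eq_right_and_left_of_range_le hE (hErange ▸ inf_le_right)
  obtain ⟨hPE', hEP'⟩ := hP'.mul_eq_right_and_left_of_range_le hE' (hE'range ▸ inf_le_left)
  obtain ⟨hQE', hEQ'⟩ := hQ'.mul_eq_right_and_left_of_range_le hE' (hE'range ▸ inf_le_right)
  have hT : IsSelfAdjoint (P * Q * P - E) :=
    (hQ.isSelfAdjoint.conjugate_self hP.isSelfAdjoint).sub hE.isSelfAdjoint
  have := hT.isStarNormal
  refine norm_le_norm_of_spectrum_sdiff_subset (fun c hc => ?_) ?_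
  · ext x
    exact eq_zero_of_mul_mul_sub_apply_eq_self hP hQ hE hErange (by rw [← mul_apply_eq_comp, hc])
  · rw [spectrum_mul_mul_sub_sdiff_eq hP.isIdempotentElem hQ.isIdempotentElem hE.isIdempotentElem
      hPE hEP hQE hEQ, hdiff, ← spectrum_mul_mul_sub_sdiff_eq hP'.isIdempotentElem
      hQ'.isIdempotentElem hE'.isIdempotentElem hPE' hEP' hQE' hEQ']
    exact Set.sdiff_subset

theorem friedrichs_angle_invariant (P Q P' Q' E E' : H →L[ℂ] H)
    (hP : IsOrthogonalProjection P) (hQ : IsOrthogonalProjection Q)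
    (hP' : IsOrthogonalProjection P') (hQ' : IsOrthogonalProjection Q')
    (hdiff : P - Q = P' - Q')
    (hE : IsOrthogonalProjection E)
    (hErange : LinearMap.range (E : H →ₗ[ℂ] H) = LinearMap.range (P : H →ₗ[ℂ] H) ⊓ LinearMap.range (Q : H →ₗ[ℂ] H))
    (hE' : IsOrthogonalProjection E')
    (hE'range : LinearMap.range (E' : H →ₗ[ℂ] H) = LinearMap.range (P' : H →ₗ[ℂ] H) ⊓ LinearMap.range (Q' : H →ₗ[ℂ] H)) :
    ‖P * Q - E‖ = ‖P' * Q' - E'‖ := by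
  replace hP := hP.isStarProjection
  replace hQ := hQ.isStarProjection
  replace hE := hE.isStarProjection
  replace hP' := hP'.isStarProjection
  replace hQ' := hQ'.isStarProjection
  replace hE' := hE'.isStarProjection
  obtain ⟨hPE, -⟩ := hP.mul_eq_right_and_left_of_range_le hE (hErange ▸ inf_le_left)
  obtain ⟨hQE, -⟩ := hQ.mul_eq_right_and_left_of_range_le hE (hErange ▸ inf_le_right)
  obtain ⟨hPE', -⟩ := hP'.mul_eq_right_and_left_of_range_le hE' (hE'range ▸ inf_le_left)
  obtain ⟨hQE', -⟩ := hQ'.mul_eq_right_and_left_of_range_le hE' (hE'range ▸ inf_le_right)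
  rw [← sq_eq_sq₀ (norm_nonneg _) (norm_nonneg _), norm_mul_sub_sq hP hQ hE hPE hQE,
    norm_mul_sub_sq hP' hQ' hE' hPE' hQE']
  exact le_antisymm
    (norm_mul_mul_sub_le_of_sub_eq hP hQ hE hErange hP' hQ' hE' hE'range hdiff)
    (norm_mul_mul_sub_le_of_sub_eq hP' hQ' hE' hE'range hP hQ hE hErange hdiff.symm)
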